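/- For every d ≥ 2 and h ≥ 2, there exists a fractional pebbling of the balanced d-ary tree of height h that starts with no pebbles, ends with no pebbles, at some time has pebble weight 1 on the root, and such that at every time the total pebble weight on the tree is at most (d−1)·h/2 + 1. -/

import Mathlib

/-- Number of nodes of the complete d-ary tree of height h (levels 0..h-1). -/
def treeSize (d h : ℕ) : ℕ := ∑ k ∈ Finset.range h, d ^ k

/-- A fractional configuration: each node gets (black weight, white weight). -/
abbrev Cfg := ℕ → ℝ × ℝ

/-- Pebble weight of node i: b(i) + w(i). -/
def pw (c : Cfg) (i : ℕ) : ℝ := (c i).1 + (c i).2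

/-- Valid configuration: weights nonnegative, b(i)+w(i) ≤ 1, nothing outside the tree. -/
def Valid (n : ℕ) (c : Cfg) : Prop :=
  (∀ i, 0 ≤ (c i).1 ∧ 0 ≤ (c i).2 ∧ pw c i ≤ 1) ∧ (∀ i, n ≤ i → c i = (0, 0))

/-- Total pebble weight of a configuration. -/
def weight (n : ℕ) (c : Cfg) : ℝ := ∑ i ∈ Finset.range n, pw c i

/-- j is a child of i in heap indexing of the d-ary tree. -/
def child (d i j : ℕ) : Prop := ∃ k, k < d ∧ j = d * i + 1 + k

def isLeaf (d n i : ℕ) : Prop := i < n ∧ n ≤ d * i + 1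

/-- Every child of i has pebble weight 1. -/
def covered (d : ℕ) (c : Cfg) (i : ℕ) : Prop := ∀ j, child d i j → pw c j = 1

/-- Legal fractional pebbling moves: decrease black weight on any node; on a node
whose children all have pebble weight 1, set its white weight to 0 and increase its
black weight arbitrarily, optionally simultaneously decreasing children's black
weights (sliding); increase white weight on any node (subject to validity);
increase black weight on any leaf. -/
def Move (d n : ℕ) (c c' : Cfg) : Prop :=
  (∃ i, (c' i).1 ≤ (c i).1 ∧ (c' i).2 = (c i).2 ∧ ∀ j, j ≠ i → c' j = c j) ∨
  (∃ i, i < n ∧ covered d c i ∧ (c i).1 ≤ (c' i).1 ∧ (c' i).2 = 0 ∧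
    (∀ j, child d i j → (c' j).1 ≤ (c j).1 ∧ (c' j).2 = (c j).2) ∧
    (∀ j, j ≠ i → ¬ child d i j → c' j = c j)) ∨
  (∃ i, (c' i).1 = (c i).1 ∧ (c i).2 ≤ (c' i).2 ∧ ∀ j, j ≠ i → c' j = c j) ∨
  (∃ i, isLeaf d n i ∧ (c' i).2 = (c i).2 ∧ (c i).1 ≤ (c' i).1 ∧ ∀ j, j ≠ i → c' j = c j)

/-- A fractional pebbling: valid configurations connected by legal moves. -/
def Pebbling (d n T : ℕ) (c : ℕ → Cfg) : Prop :=
  (∀ t, t ≤ T → Valid n (c t)) ∧ (∀ t, t < T → Move d n (c t) (c (t + 1)))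

def EmptyCfg (c : Cfg) : Prop := ∀ i, c i = (0, 0)

/-- Root-pebbling: starts and ends empty; at some time the root has pebble weight 1. -/
def RootPebbling (d n T : ℕ) (c : ℕ → Cfg) : Prop :=
  Pebbling d n T c ∧ EmptyCfg (c 0) ∧ EmptyCfg (c T) ∧ ∃ t, t ≤ T ∧ pw (c t) 0 = 1

/-!
Nodes are pebbled recursively from the leaves up. To pebble a node `v` of height `k + 1`, give
each of its first `d - 1` children black weight `1/2` (pebbling the child, then clearing
everything below it), pebble the last child fully, add white weight `1/2` to the first `d - 1`
children and slide: `v` gets black weight and the children lose theirs. What remains is white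
weight `1/2` on the first `d - 1` children and, recursively, the same pattern below the last
child: a pile of weight `(d - 1)(k - 1)/2`, cleared afterwards by pebbling each of those children
once more with black weight `0`, which erases its white weight. The weight peaks while the last
child is pebbled on top of the `(d - 1)/2` held by its siblings, so the bound grows by
`(d - 1)/2` per level, starting from `d` at height `2`, where the children are leaves and get
full black pebbles (white weight on a leaf could never be removed).
-/

namespace FracPebbling

open Finset Relation

section Tree

variable {d : ℕ}

lemma treeSize_succ (d l : ℕ) : treeSize d (l + 1) = d * treeSize d l + 1 := by
  rw [treeSize, sum_range_succ', treeSize, mul_sum]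
  simp [pow_succ, mul_comm]

lemma treeSize_mono (d : ℕ) : Monotone (treeSize d) := fun _ _ hab =>
  sum_le_sum_of_subset (range_subset_range.2 hab)

lemma self_lt_mul_add_one_add (hd : 0 < d) {v m : ℕ} : v < d * v + 1 + m := by nlinarith

lemma child_self_add (d v : ℕ) {m : ℕ} (hm : m < d) : child d v (d * v + 1 + m) := ⟨m, hm, rfl⟩

lemma lt_of_child {v u : ℕ} (h : child d v u) : v < u := by
  obtain ⟨m, hm, rfl⟩ := h
  exact self_lt_mul_add_one_add (by omega)

lemma child_le {v u : ℕ} (h : child d v u) : u ≤ d * v + d := by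
  obtain ⟨m, hm, rfl⟩ := h
  omega

lemma eq_of_child_of_child {v v' u : ℕ} (h : child d v u) (h' : child d v' u) :
    v = v' := by
  obtain ⟨m, hm, rfl⟩ := h
  obtain ⟨m', hm', e⟩ := h'
  have hd : 0 < d := by omega
  have key : ∀ x k, k < d → (d * x + k) / d = x := fun x k hk => by
    rw [Nat.mul_add_div hd, Nat.div_eq_of_lt hk, add_zero]
  rw [← key v m hm, ← key v' m' hm']
  congr 1
  omega

/-- The nodes of the tree of height `h` whose subtree has height `k`, i.e. the nodes of
depth `h - k`. -/
def AtHeight (d h k v : ℕ) : Prop := treeSize d (h - k) ≤ v ∧ v < treeSize d (h - k + 1)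

lemma AtHeight.child {h k v m : ℕ} (hv : AtHeight d h (k + 1) v) (hkh : k + 1 ≤ h)
    (hm : m < d) : AtHeight d h k (d * v + 1 + m) := by
  obtain ⟨hv₁, hv₂⟩ := hv
  have e : h - k = h - (k + 1) + 1 := by omega
  rw [AtHeight, e, treeSize_succ, treeSize_succ d (h - (k + 1) + 1)]
  constructor <;> nlinarith

lemma AtHeight.lt_treeSize {h k v : ℕ} (hv : AtHeight d h k v) (hk : 1 ≤ k) (hkh : k ≤ h) :
    v < treeSize d h :=
  hv.2.trans_le (treeSize_mono d (by omega))

lemma AtHeight.isLeaf {h v : ℕ} (hv : AtHeight d h 1 v) (hh : 1 ≤ h) :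
    isLeaf d (treeSize d h) v := by
  obtain ⟨hv₁, hv₂⟩ := hv
  rw [Nat.sub_add_cancel hh] at hv₂
  refine ⟨hv₂, ?_⟩
  rw [← Nat.sub_add_cancel hh, treeSize_succ]
  nlinarith

lemma AtHeight.last_child_lt_treeSize {h k v : ℕ} (hv : AtHeight d h (k + 1) v) (hk : 1 ≤ k)
    (hkh : k + 1 ≤ h) (hd : 0 < d) : d * v + d < treeSize d h := by
  have := (hv.child hkh (by omega : d - 1 < d)).lt_treeSize hk (by omega)
  omega

lemma atHeight_root {h : ℕ} : AtHeight d h h 0 := by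
  simp [AtHeight, treeSize]

/-- Also contains the indices beyond the tree below `v`. -/
def subtree (d v : ℕ) : Set ℕ := {i | ReflTransGen (child d) v i}

def descendants (d v : ℕ) : Set ℕ := {i | TransGen (child d) v i}

lemma mem_subtree_self (d v : ℕ) : v ∈ subtree d v := ReflTransGen.refl

lemma descendants_subset_subtree (d v : ℕ) : descendants d v ⊆ subtree d v :=
  fun _ h => TransGen.to_reflTransGen h

lemma subtree_subset_descendants {v u : ℕ} (h : child d v u) : subtree d u ⊆ descendants d v :=
  fun _ hi => TransGen.head' h hi

lemma subtree_child_subset_subtree {v m : ℕ} (hm : m < d) :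
    subtree d (d * v + 1 + m) ⊆ subtree d v :=
  (subtree_subset_descendants (child_self_add d v hm)).trans (descendants_subset_subtree d v)

lemma mem_descendants_iff {v i : ℕ} :
    i ∈ descendants d v ↔ ∃ m < d, i ∈ subtree d (d * v + 1 + m) := by
  simp only [descendants, subtree, Set.mem_ofPred_eq, TransGen.head'_iff]
  constructor
  · rintro ⟨u, ⟨m, hm, rfl⟩, hu⟩
    exact ⟨m, hm, hu⟩
  · rintro ⟨m, hm, hu⟩
    exact ⟨_, child_self_add d v hm, hu⟩

lemma le_of_mem_subtree {v i : ℕ} (h : i ∈ subtree d v) : v ≤ i := by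
  induction h with
  | refl => rfl
  | tail _ hc ih => exact ih.trans (lt_of_child hc).le

lemma lt_of_mem_descendants {v i : ℕ} (h : i ∈ descendants d v) : v < i := by
  obtain ⟨u, hu, hi⟩ := TransGen.head'_iff.1 h
  exact (lt_of_child hu).trans_le (le_of_mem_subtree hi)

lemma mem_descendants_of_mem_subtree_of_ne {v i : ℕ} (h : i ∈ subtree d v) (hne : i ≠ v) :
    i ∈ descendants d v := by
  rcases ReflTransGen.cases_head_iff.1 h with rfl | ⟨u, hu, hi⟩
  · exact absurd rfl hne
  · exact TransGen.head' hu hi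

/-- Ancestors of a node form a chain, because every node has at most one parent. -/
lemma mem_subtree_or_mem_subtree {a b i : ℕ} (ha : i ∈ subtree d a)
    (hb : i ∈ subtree d b) : b ∈ subtree d a ∨ a ∈ subtree d b := by
  induction ha generalizing b with
  | refl => exact Or.inr hb
  | @tail j i _ hji ih =>
    rcases (ReflTransGen.cases_tail_iff _ _ _).1 hb with rfl | ⟨j', hj', hj'i⟩
    · exact Or.inl (ReflTransGen.tail ‹_› hji)
    · exact ih (eq_of_child_of_child hj'i hji ▸ hj')

lemma self_notMem_subtree_child (hd : 0 < d) {v m : ℕ} : v ∉ subtree d (d * v + 1 + m) :=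
  fun h => (self_lt_mul_add_one_add hd).not_ge (le_of_mem_subtree h)

lemma mul_lt_of_mem_descendants {u i : ℕ} (h : i ∈ descendants d u) : d * u < i := by
  obtain ⟨x, ⟨k, -, rfl⟩, hx⟩ := TransGen.head'_iff.1 h
  have := le_of_mem_subtree hx
  omega

lemma lt_of_mem_descendants_child (hd : 0 < d) {v m i : ℕ}
    (h : i ∈ descendants d (d * v + 1 + m)) : d * v + d < i := by
  have h₁ := mul_lt_of_mem_descendants h
  have : v ≤ d * v := Nat.le_mul_of_pos_left v hd
  nlinarith

lemma disjoint_subtree_children (hd : 0 < d) {v m m' : ℕ} (hm : m < d) (hm' : m' < d)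
    (hne : m ≠ m') : Disjoint (subtree d (d * v + 1 + m)) (subtree d (d * v + 1 + m')) := by
  have far : ∀ {a b : ℕ}, b < d → d * v + 1 + b ∉ descendants d (d * v + 1 + a) :=
    fun hb h => by have := lt_of_mem_descendants_child hd h; omega
  refine Set.disjoint_left.2 fun i hi hi' => ?_
  rcases mem_subtree_or_mem_subtree hi hi' with h | h
  · exact far hm' (mem_descendants_of_mem_subtree_of_ne h (by omega))
  · exact far hm (mem_descendants_of_mem_subtree_of_ne h (by omega))

lemma mem_subtree_zero (hd : 0 < d) (i : ℕ) : i ∈ subtree d 0 := by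
  induction i using Nat.strong_induction_on with
  | _ i ih =>
    rcases Nat.eq_zero_or_pos i with rfl | hi
    · exact mem_subtree_self d 0
    · have hp : child d ((i - 1) / d) i :=
        ⟨(i - 1) % d, Nat.mod_lt _ hd, by have := Nat.div_add_mod (i - 1) d; omega⟩
      exact ReflTransGen.tail (ih _ (lt_of_child hp)) hp

end Tree

section Moves

variable {d n : ℕ} {W : ℝ} {c c' : Cfg}

def BoundedMove (d n : ℕ) (W : ℝ) (c c' : Cfg) : Prop :=
  Move d n c c' ∧ Valid n c' ∧ weight n c' ≤ W

/-- The weight of the starting configuration is not constrained. -/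
def Reach (d n : ℕ) (W : ℝ) : Cfg → Cfg → Prop := ReflTransGen (BoundedMove d n W)

lemma Reach.mono {W' : ℝ} (h : Reach d n W c c') (hW : W ≤ W') : Reach d n W' c c' :=
  ReflTransGen.mono (fun _ _ ⟨hm, hv, hw⟩ => ⟨hm, hv, hw.trans hW⟩) _ _ h

lemma Reach.valid (h : Reach d n W c c') (hc : Valid n c) : Valid n c' := by
  induction h with
  | refl => exact hc
  | tail _ hm _ => exact hm.2.1

lemma Reach.single (hm : Move d n c c') (hv : Valid n c') (hw : weight n c' ≤ W) :
    Reach d n W c c' :=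
  ReflTransGen.single ⟨hm, hv, hw⟩

lemma pw_nonneg (hc : Valid n c) (i : ℕ) : 0 ≤ pw c i := add_nonneg (hc.1 i).1 (hc.1 i).2.1

lemma weight_eq_add_sum_sub {s : Finset ℕ} (hs : s ⊆ range n) (h : ∀ j ∉ s, c' j = c j) :
    weight n c' = weight n c + ∑ j ∈ s, (pw c' j - pw c j) := by
  have : ∑ j ∈ s, (pw c' j - pw c j) = ∑ j ∈ range n, (pw c' j - pw c j) :=
    sum_subset hs fun j _ hj => by rw [pw, pw, h j hj, sub_self]
  rw [this, weight, weight, sum_sub_distrib]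
  ring

lemma weight_update {i : ℕ} (hi : i < n) (c : Cfg) (p : ℝ × ℝ) :
    weight n (Function.update c i p) = weight n c + (p.1 + p.2) - pw c i := by
  rw [weight_eq_add_sum_sub (s := ({i} : Finset ℕ)) (by simpa using hi)
    (fun j hj => Function.update_of_ne (a' := i) (by simpa using hj) p c), sum_singleton]
  simp only [pw, Function.update_self]
  ring

lemma valid_update {i : ℕ} (hc : Valid n c) (hi : i < n) {p : ℝ × ℝ} (h₁ : 0 ≤ p.1)
    (h₂ : 0 ≤ p.2) (h₃ : p.1 + p.2 ≤ 1) : Valid n (Function.update c i p) := by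
  refine ⟨fun j => ?_, fun j hj => ?_⟩
  · rcases eq_or_ne j i with rfl | hne
    · simpa [pw] using ⟨h₁, h₂, h₃⟩
    · simpa [pw, hne] using hc.1 j
  · rw [Function.update_of_ne (by omega)]
    exact hc.2 j hj

lemma reach_update {i : ℕ} {p : ℝ × ℝ} (hm : Move d n c (Function.update c i p)) (hc : Valid n c)
    (hi : i < n) (h₁ : 0 ≤ p.1) (h₂ : 0 ≤ p.2) (h₃ : p.1 + p.2 ≤ 1)
    (hW : weight n c + (p.1 + p.2) - pw c i ≤ W) : Reach d n W c (Function.update c i p) :=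
  Reach.single hm (valid_update hc hi h₁ h₂ h₃) (by rwa [weight_update hi])

lemma move_update_black_le {i : ℕ} {p : ℝ × ℝ} (h₁ : p.1 ≤ (c i).1) (h₂ : p.2 = (c i).2) :
    Move d n c (Function.update c i p) :=
  Or.inl ⟨i, by simpa using h₁, by simpa using h₂, fun _ hj => Function.update_of_ne hj _ _⟩

lemma move_update_white_ge {i : ℕ} {p : ℝ × ℝ} (h₁ : p.1 = (c i).1) (h₂ : (c i).2 ≤ p.2) :
    Move d n c (Function.update c i p) :=
  Or.inr <| Or.inr <| Or.inl ⟨i, by simpa using h₁, by simpa using h₂,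
    fun _ hj => Function.update_of_ne hj _ _⟩

lemma move_update_leaf {i : ℕ} {p : ℝ × ℝ} (hi : isLeaf d n i) (h₁ : (c i).1 ≤ p.1)
    (h₂ : p.2 = (c i).2) : Move d n c (Function.update c i p) :=
  Or.inr <| Or.inr <| Or.inr ⟨i, hi, by simpa using h₂, by simpa using h₁,
    fun _ hj => Function.update_of_ne hj _ _⟩

end Moves

section Pile

variable {d : ℕ} {c c' : Cfg}

def EmptyBelow (d : ℕ) (c : Cfg) (v : ℕ) : Prop := Set.EqOn c 0 (descendants d v)

lemma EmptyBelow.congr {v : ℕ} (h : EmptyBelow d c v) (hc : Set.EqOn c' c (descendants d v)) :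
    EmptyBelow d c' v :=
  hc.trans h

lemma and_emptyBelow_of_eqOn_subtree {u : ℕ} {x : ℝ × ℝ} (h : Set.EqOn c' c (subtree d u))
    (hs : c u = x ∧ EmptyBelow d c u) : c' u = x ∧ EmptyBelow d c' u :=
  ⟨(h (mem_subtree_self d u)).trans hs.1, hs.2.congr (h.mono (descendants_subset_subtree d u))⟩

lemma EmptyBelow.update {v : ℕ} (h : EmptyBelow d c v) (p : ℝ × ℝ) :
    EmptyBelow d (Function.update c v p) v := fun _ hi =>
  (Function.update_of_ne (lt_of_mem_descendants hi).ne' p c).trans (h hi)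

lemma update_eqOn_compl_subtree (v : ℕ) (p : ℝ × ℝ) :
    Set.EqOn (Function.update c v p) c (subtree d v)ᶜ := fun _ hi =>
  Function.update_of_ne (a' := v) (fun h => hi (by rw [h]; exact mem_subtree_self d v)) p c

lemma EmptyBelow.child {v m : ℕ} (h : EmptyBelow d c v) (hm : m < d) :
    c (d * v + 1 + m) = 0 ∧ EmptyBelow d c (d * v + 1 + m) :=
  ⟨h (TransGen.single (child_self_add d v hm)),
    h.mono ((descendants_subset_subtree d _).trans
      (subtree_subset_descendants (child_self_add d v hm)))⟩

/-- The white pebbles left below a node of height `k` after pebbling it (none for `k ≤ 2`). -/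
def Pile (d : ℕ) (c : Cfg) : ℕ → ℕ → Prop
  | k + 3, v => (∀ m < d - 1, c (d * v + 1 + m) = (0, 1 / 2) ∧ EmptyBelow d c (d * v + 1 + m)) ∧
      c (d * v + 1 + (d - 1)) = 0 ∧ Pile d c (k + 2) (d * v + 1 + (d - 1))
  | _, v => EmptyBelow d c v

lemma Pile.congr (hd : 0 < d) : ∀ {k v : ℕ}, Pile d c k v → Set.EqOn c' c (descendants d v) →
    Pile d c' k v
  | k + 3, v, ⟨hfirst, hlast, hpile⟩, hc => by
    have child : ∀ {m}, m < d → Set.EqOn c' c (subtree d (d * v + 1 + m)) :=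
      fun hm => hc.mono (subtree_subset_descendants (child_self_add d v hm))
    exact ⟨fun m hm => and_emptyBelow_of_eqOn_subtree (child (by omega)) (hfirst m hm),
      (child (by omega) (mem_subtree_self d _)).trans hlast,
      Pile.congr hd hpile ((child (by omega)).mono (descendants_subset_subtree d _))⟩
  | 0, _, h, hc | 1, _, h, hc | 2, _, h, hc => EmptyBelow.congr h hc

/-- The total weight of `Pile d c k v`. -/
noncomputable def pileWeight (d k : ℕ) : ℝ := ((d : ℝ) - 1) * ((k : ℝ) - 2) / 2

/-- The extra weight needed to pebble a node of height `k`. -/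
noncomputable def budget (d k : ℕ) : ℝ := ((d : ℝ) - 1) * k / 2 + 1

lemma pileWeight_two (d : ℕ) : pileWeight d 2 = 0 := by simp [pileWeight]

lemma pileWeight_succ (d k : ℕ) : pileWeight d (k + 1) = pileWeight d k + ((d : ℝ) - 1) / 2 := by
  simp only [pileWeight]; push_cast; ring

lemma budget_succ (d k : ℕ) : budget d (k + 1) = budget d k + ((d : ℝ) - 1) / 2 := by
  simp only [budget]; push_cast; ring

lemma pileWeight_add_self (d k : ℕ) : pileWeight d k + d = budget d k := by
  simp only [pileWeight, budget]; ring

lemma pileWeight_nonneg (hd : 0 < d) {k : ℕ} (hk : 2 ≤ k) : 0 ≤ pileWeight d k := by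
  have : (1 : ℝ) ≤ d := by exact_mod_cast hd
  have : (2 : ℝ) ≤ k := by exact_mod_cast hk
  unfold pileWeight
  apply div_nonneg (mul_nonneg _ _) <;> linarith

end Pile

section Slide

variable {d n : ℕ} {c : Cfg} {v : ℕ} {β : ℝ}

instance (d v : ℕ) : DecidablePred (child d v) := fun i =>
  inferInstanceAs (Decidable (∃ k, k < d ∧ i = d * v + 1 + k))

/-- The result of move (ii) at `v` with black weight `β` that slides away all black weight of the
children. -/
def slide (d v : ℕ) (β : ℝ) (c : Cfg) : Cfg := fun i =>
  if i = v then (β, 0) else if child d v i then (0, (c i).2) else c i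

lemma slide_self : slide d v β c v = (β, 0) := if_pos rfl

lemma slide_of_child {u : ℕ} (hu : child d v u) : slide d v β c u = (0, (c u).2) := by
  rw [slide, if_neg (lt_of_child hu).ne', if_pos hu]

lemma slide_of_ne {i : ℕ} (hv : i ≠ v) (hu : ¬ child d v i) : slide d v β c i = c i := by
  rw [slide, if_neg hv, if_neg hu]

lemma slide_eqOn_compl_subtree : Set.EqOn (slide d v β c) c (subtree d v)ᶜ := fun _ hi =>
  slide_of_ne (fun h => hi (h ▸ mem_subtree_self d v)) (fun h => hi (ReflTransGen.single h))

lemma slide_eqOn_descendants_child (hd : 0 < d) {m : ℕ} :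
    Set.EqOn (slide d v β c) c (descendants d (d * v + 1 + m)) := fun i hi => by
  have := lt_of_mem_descendants_child hd hi
  have : v ≤ d * v := Nat.le_mul_of_pos_left v hd
  exact slide_of_ne (by omega) (fun h => by have := child_le h; omega)

lemma move_slide (hc : Valid n c) (hv : v < n) (hcov : covered d c v) (hβ : (c v).1 ≤ β) :
    Move d n c (slide d v β c) :=
  Or.inr <| Or.inl ⟨v, hv, hcov, by rwa [slide_self], by rw [slide_self],
    fun j hj => by rw [slide_of_child hj]; exact ⟨(hc.1 j).1, rfl⟩,
    fun _ hj hj' => slide_of_ne hj hj'⟩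

lemma valid_slide (hc : Valid n c) (hv : v < n) (hβ₀ : 0 ≤ β) (hβ₁ : β ≤ 1) :
    Valid n (slide d v β c) := by
  refine ⟨fun i => ?_, fun i hi => ?_⟩
  · have := hc.1 i
    unfold pw at this ⊢
    unfold slide
    split_ifs <;> refine ⟨?_, ?_, ?_⟩ <;> linarith
  · unfold slide
    rw [if_neg (by omega)]
    split_ifs <;> simp [hc.2 i hi]

lemma weight_slide (hv : v < n) (hch : d * v + d < n) :
    weight n (slide d v β c) = weight n c + β - pw c v - ∑ m ∈ range d, (c (d * v + 1 + m)).1 := by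
  set children := (range d).map (addLeftEmbedding (d * v + 1))
  have hchild : ∀ j ∈ children, child d v j := by
    simp only [children, mem_map, Finset.mem_range, addLeftEmbedding_apply]
    rintro j ⟨m, hm, rfl⟩
    exact child_self_add d v hm
  have hvc : v ∉ children := fun h => (lt_of_child (hchild v h)).false
  have hsum : ∑ j ∈ children, (pw (slide d v β c) j - pw c j) =
      -∑ m ∈ range d, (c (d * v + 1 + m)).1 := by
    rw [sum_map, ← sum_neg_distrib]
    refine sum_congr rfl fun m hm => ?_
    rw [addLeftEmbedding_apply, pw, pw, slide_of_child (child_self_add d v (mem_range.1 hm))]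
    ring
  rw [weight_eq_add_sum_sub (s := insert v children) ?_ ?_, sum_insert hvc, hsum, pw, pw,
    slide_self]
  · ring
  · intro j hj
    simp only [Finset.mem_insert, children, mem_map, Finset.mem_range,
      addLeftEmbedding_apply] at hj
    obtain rfl | ⟨m, hm, rfl⟩ := hj <;> simp only [Finset.mem_range] <;> omega
  · intro j hj
    simp only [Finset.mem_insert, not_or] at hj
    refine slide_of_ne hj.1 fun ⟨m, hm, hjm⟩ => hj.2 ?_
    simp only [children, mem_map, Finset.mem_range, addLeftEmbedding_apply]
    exact ⟨m, hm, hjm.symm⟩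

lemma reach_slide {W : ℝ} (hc : Valid n c) (hv : v < n) (hcov : covered d c v)
    (hβ : (c v).1 ≤ β) (hβ₁ : β ≤ 1) (hW : weight n (slide d v β c) ≤ W) :
    Reach d n W c (slide d v β c) :=
  Reach.single (move_slide hc hv hcov hβ) (valid_slide hc hv ((hc.1 v).1.trans hβ) hβ₁) hW

end Slide

section Children

variable {d n : ℕ} {c c' : Cfg}

lemma eqOn_subtree_sibling (hd : 0 < d) {v m m' : ℕ} (hm : m < d) (hm' : m' < d) (hne : m ≠ m')
    (h : Set.EqOn c' c (subtree d (d * v + 1 + m))ᶜ) :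
    Set.EqOn c' c (subtree d (d * v + 1 + m')) :=
  fun _ hi => h fun hi' => Set.disjoint_left.1 (disjoint_subtree_children hd hm hm' hne) hi' hi

lemma eqOn_subtree_child_of_eqOn (hd : 0 < d) {v M m : ℕ} (hM : M ≤ m) (hm : m < d)
    (h : Set.EqOn c' c {i | ∀ m' < M, i ∉ subtree d (d * v + 1 + m')}) :
    Set.EqOn c' c (subtree d (d * v + 1 + m)) := fun _ hi => h fun m' hm' hi' =>
  Set.disjoint_left.1 (disjoint_subtree_children hd (by omega) hm (by omega : m' ≠ m)) hi' hi

lemma emptyBelow_of_children {v : ℕ}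
    (h : ∀ m < d, c (d * v + 1 + m) = 0 ∧ EmptyBelow d c (d * v + 1 + m)) : EmptyBelow d c v := by
  intro i hi
  obtain ⟨m, hm, hi⟩ := mem_descendants_iff.1 hi
  rcases eq_or_ne i (d * v + 1 + m) with rfl | hne
  · exact (h m hm).1
  · exact (h m hm).2 (mem_descendants_of_mem_subtree_of_ne hi hne)

/-- Running `step` on the first `M` children of `v`, one after the other: each run changes
the weight by `q` and exceeds the weight at its start by at most `P`. -/
lemma reach_children (hd : 0 < d) {v : ℕ} {P q W : ℝ} {src dst : ℝ × ℝ}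
    (step : ∀ m < d, ∀ c : Cfg, Valid n c → c (d * v + 1 + m) = src →
      EmptyBelow d c (d * v + 1 + m) →
      ∃ c', Reach d n (weight n c + P) c c' ∧ Set.EqOn c' c (subtree d (d * v + 1 + m))ᶜ ∧
        c' (d * v + 1 + m) = dst ∧ EmptyBelow d c' (d * v + 1 + m) ∧
        weight n c' = weight n c + q)
    {M : ℕ} (hM : M ≤ d) (hc : Valid n c)
    (hsrc : ∀ m < M, c (d * v + 1 + m) = src ∧ EmptyBelow d c (d * v + 1 + m))
    (hW : ∀ m < M, weight n c + m * q + P ≤ W) :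
    ∃ c', Reach d n W c c' ∧ Set.EqOn c' c {i | ∀ m < M, i ∉ subtree d (d * v + 1 + m)} ∧
      (∀ m < M, c' (d * v + 1 + m) = dst ∧ EmptyBelow d c' (d * v + 1 + m)) ∧
      weight n c' = weight n c + M * q := by
  induction M with
  | zero => exact ⟨c, ReflTransGen.refl, fun _ _ => rfl, by simp, by simp⟩
  | succ M ih =>
    obtain ⟨c₁, hr₁, hfr₁, hdst₁, hw₁⟩ :=
      ih (by omega) (fun m hm => hsrc m (by omega)) (fun m hm => hW m (by omega))
    obtain ⟨hsrc₁, hempty₁⟩ := and_emptyBelow_of_eqOn_subtree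
      (eqOn_subtree_child_of_eqOn hd le_rfl (by omega) hfr₁) (hsrc M (by omega))
    obtain ⟨c₂, hr₂, hfr₂, hdst₂, hempty₂, hw₂⟩ := step M (by omega) c₁ (hr₁.valid hc) hsrc₁ hempty₁
    refine ⟨c₂, hr₁.trans (hr₂.mono (by rw [hw₁]; exact hW M (by omega))), ?_, ?_, ?_⟩
    · intro i hi
      rw [hfr₂ (hi M (by omega)), hfr₁ fun m hm => hi m (by omega)]
    · intro m hm
      rcases Nat.lt_succ_iff_lt_or_eq.1 hm with hm | rfl
      · exact and_emptyBelow_of_eqOn_subtree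
          (eqOn_subtree_sibling hd (by omega) (by omega) (by omega : M ≠ m) hfr₂) (hdst₁ m hm)
      · exact ⟨hdst₂, hempty₂⟩
    · rw [hw₂, hw₁]
      push_cast
      ring

lemma exists_reach_leaf_black {u : ℕ} (hu : isLeaf d n u) (hc : Valid n c) (hcu : c u = 0)
    (he : EmptyBelow d c u) :
    ∃ c', Reach d n (weight n c + 1) c c' ∧ Set.EqOn c' c (subtree d u)ᶜ ∧ c' u = (1, 0) ∧
      EmptyBelow d c' u ∧ weight n c' = weight n c + 1 := by
  refine ⟨_, reach_update (move_update_leaf hu (by simp [hcu]) (by simp [hcu])) hc hu.1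
    zero_le_one le_rfl (by norm_num) ?_, update_eqOn_compl_subtree _ _,
    Function.update_self .., he.update _, ?_⟩
  · simp [pw, hcu]
  · simp [weight_update hu.1, pw, hcu]

lemma exists_reach_white_half {u : ℕ} (hu : u < n) (hc : Valid n c) (hcu : c u = (1 / 2, 0))
    (he : EmptyBelow d c u) :
    ∃ c', Reach d n (weight n c + 1 / 2) c c' ∧ Set.EqOn c' c (subtree d u)ᶜ ∧
      c' u = (1 / 2, 1 / 2) ∧ EmptyBelow d c' u ∧ weight n c' = weight n c + 1 / 2 := by
  refine ⟨_, reach_update (move_update_white_ge (by simp [hcu]) (by simp [hcu])) hc hu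
    (by norm_num) (by norm_num) (by norm_num) ?_, update_eqOn_compl_subtree _ _,
    Function.update_self .., he.update _, ?_⟩
  · simp only [pw, hcu]
    linarith
  · rw [weight_update hu]
    simp only [pw, hcu]
    ring

end Children

section Strategy

variable {d h k : ℕ}

/-- Since move (ii) resets the white weight of `v`, this also removes white weight from `v`: that
is how piles are cleared. -/
def PebblesWithPile (d h k : ℕ) : Prop :=
  ∀ ⦃v : ℕ⦄ ⦃c : Cfg⦄ ⦃β : ℝ⦄, AtHeight d h k v → Valid (treeSize d h) c →
    EmptyBelow d c v → (c v).1 ≤ β → β ≤ 1 →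
    ∃ c', Reach d (treeSize d h) (weight (treeSize d h) c + budget d k) c c' ∧
      Set.EqOn c' c (subtree d v)ᶜ ∧ c' v = (β, 0) ∧ Pile d c' k v ∧
      weight (treeSize d h) c' = weight (treeSize d h) c - pw c v + β + pileWeight d k

def ClearsPile (d h k : ℕ) : Prop :=
  ∀ ⦃v : ℕ⦄ ⦃c : Cfg⦄, AtHeight d h k v → Valid (treeSize d h) c → Pile d c k v →
    ∃ c', Reach d (treeSize d h) (weight (treeSize d h) c + d) c c' ∧
      Set.EqOn c' c (descendants d v)ᶜ ∧ EmptyBelow d c' v ∧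
      weight (treeSize d h) c' = weight (treeSize d h) c - pileWeight d k

lemma PebblesWithPile.clean (hP : PebblesWithPile d h k) (hC : ClearsPile d h k) {v : ℕ}
    {c : Cfg} {β : ℝ} (hv : AtHeight d h k v) (hc : Valid (treeSize d h) c)
    (he : EmptyBelow d c v) (hβ : (c v).1 ≤ β) (hβ₁ : β ≤ 1) :
    ∃ c', Reach d (treeSize d h) (weight (treeSize d h) c + budget d k + β) c c' ∧
      Set.EqOn c' c (subtree d v)ᶜ ∧ c' v = (β, 0) ∧ EmptyBelow d c' v ∧
      weight (treeSize d h) c' = weight (treeSize d h) c - pw c v + β := by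
  obtain ⟨c₁, hr₁, hfr₁, hv₁, hpile₁, hw₁⟩ := hP hv hc he hβ hβ₁
  obtain ⟨c₂, hr₂, hfr₂, he₂, hw₂⟩ := hC hv (hr₁.valid hc) hpile₁
  have hβ₀ : 0 ≤ β := (hc.1 v).1.trans hβ
  have hpw := pw_nonneg hc v
  have := pileWeight_add_self d k
  refine ⟨c₂, (hr₁.mono (by linarith)).trans (hr₂.mono (by rw [hw₁]; linarith)), ?_,
    (hfr₂ fun h => (lt_of_mem_descendants h).false).trans hv₁, he₂, by rw [hw₂, hw₁]; ring⟩
  exact fun i hi => (hfr₂ fun h => hi (descendants_subset_subtree d v h)).trans (hfr₁ hi)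

lemma clearsPile_two : ClearsPile d h 2 := fun _ c _ _ hpile =>
  ⟨c, ReflTransGen.refl, fun _ _ => rfl, hpile, by rw [pileWeight_two, sub_zero]⟩

lemma pile_succ {c : Cfg} {v : ℕ} (hk : 2 ≤ k) :
    Pile d c (k + 1) v ↔
      (∀ m < d - 1, c (d * v + 1 + m) = (0, 1 / 2) ∧ EmptyBelow d c (d * v + 1 + m)) ∧
        c (d * v + 1 + (d - 1)) = 0 ∧ Pile d c k (d * v + 1 + (d - 1)) := by
  obtain ⟨k, rfl⟩ : ∃ k', k = k' + 2 := ⟨k - 2, by omega⟩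
  exact Iff.rfl

lemma clearsPile_succ (hd : 0 < d) (hk : 2 ≤ k) (hkh : k + 1 ≤ h) (hP : PebblesWithPile d h k)
    (hC : ClearsPile d h k) : ClearsPile d h (k + 1) := by
  intro v c hv hc hpile
  obtain ⟨hfirst, hlast, hpile⟩ := (pile_succ hk).1 hpile
  obtain ⟨c₁, hr₁, hfr₁, he₁, hw₁⟩ := hC (hv.child hkh (by omega)) hc hpile
  have hsame : ∀ m < d - 1, Set.EqOn c₁ c (subtree d (d * v + 1 + m)) := fun m hm =>
    eqOn_subtree_sibling hd (by omega) (by omega) (by omega : d - 1 ≠ m)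
      (hfr₁.mono (Set.compl_subset_compl.2 (descendants_subset_subtree d _)))
  obtain ⟨c₂, hr₂, hfr₂, hdst₂, hw₂⟩ := reach_children hd (n := treeSize d h) (v := v)
    (P := budget d k) (q := -(1 / 2)) (W := weight (treeSize d h) c + d) (src := (0, 1 / 2))
    (dst := 0)
    (fun m hm c hc hsrc he => by
      obtain ⟨c', hr, hfr, hv', he', hw⟩ :=
        hP.clean hC (hv.child hkh hm) hc he (by rw [hsrc]) zero_le_one
      exact ⟨c', by simpa using hr, hfr, hv', he', by rw [hw, pw, hsrc]; ring⟩)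
    (M := d - 1) (by omega) (hr₁.valid hc)
    (fun m hm => and_emptyBelow_of_eqOn_subtree (hsame m hm) (hfirst m hm))
    (fun m hm => by
      have := pileWeight_add_self d k
      have : (0 : ℝ) ≤ m := m.cast_nonneg
      rw [hw₁]; linarith)
  have hlast₂ : Set.EqOn c₂ c₁ (subtree d (d * v + 1 + (d - 1))) :=
    eqOn_subtree_child_of_eqOn hd le_rfl (by omega) hfr₂
  refine ⟨c₂, hr₁.trans hr₂, fun i hi => ?_, emptyBelow_of_children fun m hm => ?_, ?_⟩
  · have hout : ∀ m < d, i ∉ subtree d (d * v + 1 + m) :=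
      fun m hm h => hi (subtree_subset_descendants (child_self_add d v hm) h)
    exact (hfr₂ fun m hm => hout m (by omega)).trans
      (hfr₁ fun h => hout (d - 1) (by omega) (descendants_subset_subtree d _ h))
  · rcases Nat.lt_or_ge m (d - 1) with hm' | hm'
    · exact hdst₂ m hm'
    · obtain rfl : m = d - 1 := by omega
      exact and_emptyBelow_of_eqOn_subtree hlast₂
        ⟨(hfr₁ fun h => (lt_of_mem_descendants h).false).trans hlast, he₁⟩
  · rw [hw₂, hw₁, pileWeight_succ, Nat.cast_sub (by omega : 1 ≤ d)]
    push_cast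
    ring

lemma pebblesWithPile_two (hd : 0 < d) (hh : 2 ≤ h) : PebblesWithPile d h 2 := by
  intro v c β hv hc he hβ hβ₁
  obtain ⟨c₁, hr₁, hfr₁, hdst₁, hw₁⟩ := reach_children hd (n := treeSize d h) (v := v)
    (P := 1) (q := 1) (W := weight (treeSize d h) c + budget d 2) (src := 0) (dst := (1, 0))
    (fun m hm _ hc hsrc he =>
      exists_reach_leaf_black ((hv.child (k := 1) hh hm).isLeaf (by omega)) hc hsrc he)
    le_rfl hc (fun m hm => he.child hm)
    (fun m hm => by
      have : (m : ℝ) + 1 ≤ d := by exact_mod_cast hm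
      simp only [budget]; linarith)
  have hc₁ := hr₁.valid hc
  have hvn := hv.lt_treeSize (by omega) hh
  have hv₁ : c₁ v = c v := hfr₁ fun m _ => self_notMem_subtree_child hd
  have hcov : covered d c₁ v := by
    rintro _ ⟨m, hm, rfl⟩
    rw [pw, (hdst₁ m hm).1]
    norm_num
  have hsum : ∑ m ∈ range d, (c₁ (d * v + 1 + m)).1 = d := by
    rw [sum_congr rfl fun m hm => by rw [(hdst₁ m (mem_range.1 hm)).1]]
    simp
  have hw₂ := weight_slide (c := c₁) (β := β) hvn (hv.last_child_lt_treeSize le_rfl hh hd)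
  rw [hsum, hw₁, show pw c₁ v = pw c v by rw [pw, pw, hv₁]] at hw₂
  have : (1 : ℝ) ≤ d := by exact_mod_cast hd
  have hpw := pw_nonneg hc v
  refine ⟨slide d v β c₁, hr₁.trans (reach_slide hc₁ hvn hcov (hv₁ ▸ hβ) hβ₁ ?_),
    fun i hi => ?_, slide_self,
    emptyBelow_of_children fun m hm => ?_, ?_⟩
  · rw [hw₂, budget]; push_cast; linarith
  · exact (slide_eqOn_compl_subtree hi).trans
      (hfr₁ fun m hm h => hi (subtree_child_subset_subtree hm h))
  · refine ⟨by rw [slide_of_child (child_self_add d v hm), (hdst₁ m hm).1]; rfl, ?_⟩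
    exact (hdst₁ m hm).2.congr (slide_eqOn_descendants_child hd)
  · rw [hw₂, pileWeight_two]
    ring

lemma natCast_le_sub_two {m : ℕ} (hm : m < d - 1) : (m : ℝ) ≤ d - 2 := by
  have : (m : ℝ) + 2 ≤ d := by exact_mod_cast (by omega : m + 2 ≤ d)
  linarith

/-- The configuration just before the slide at a node `v` of height `k + 1`. -/
def CoveredWithPile (d k : ℕ) (c : Cfg) (v : ℕ) : Prop :=
  (∀ m < d - 1, c (d * v + 1 + m) = (1 / 2, 1 / 2) ∧ EmptyBelow d c (d * v + 1 + m)) ∧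
    c (d * v + 1 + (d - 1)) = (1, 0) ∧ Pile d c k (d * v + 1 + (d - 1))

lemma CoveredWithPile.covered {c : Cfg} {v : ℕ} (h : CoveredWithPile d k c v) :
    covered d c v := by
  rintro _ ⟨m, hm, rfl⟩
  rcases Nat.lt_or_ge m (d - 1) with hm' | hm'
  · rw [pw, (h.1 m hm').1]
    norm_num
  · rw [show m = d - 1 by omega, pw, h.2.1]
    norm_num

lemma CoveredWithPile.sum_black (hd : 0 < d) {c : Cfg} {v : ℕ} (h : CoveredWithPile d k c v) :
    ∑ m ∈ range d, (c (d * v + 1 + m)).1 = ((d : ℝ) - 1) / 2 + 1 := by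
  rw [show range d = range (d - 1 + 1) by rw [Nat.sub_add_cancel hd], sum_range_succ, h.2.1,
    sum_congr rfl fun m hm => by rw [(h.1 m (mem_range.1 hm)).1]]
  simp [Nat.cast_sub hd]
  ring

lemma CoveredWithPile.pile_slide (hd : 0 < d) (hk : 2 ≤ k) {c : Cfg} {v : ℕ} {β : ℝ}
    (h : CoveredWithPile d k c v) : Pile d (slide d v β c) (k + 1) v := by
  obtain ⟨hfirst, hlast, hpile⟩ := h
  refine (pile_succ hk).2
    ⟨fun m hm => ⟨?_, ?_⟩, ?_, hpile.congr hd (slide_eqOn_descendants_child hd)⟩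
  · rw [slide_of_child (child_self_add d v (by omega)), (hfirst m hm).1]
  · exact (hfirst m hm).2.congr (slide_eqOn_descendants_child hd)
  · rw [slide_of_child (child_self_add d v (by omega)), hlast]
    rfl

lemma exists_reach_children_half_black (hd : 0 < d) (hkh : k + 1 ≤ h)
    (hP : PebblesWithPile d h k) (hC : ClearsPile d h k) {v : ℕ} {c : Cfg}
    (hv : AtHeight d h (k + 1) v) (hc : Valid (treeSize d h) c) (he : EmptyBelow d c v) :
    ∃ c', Reach d (treeSize d h) (weight (treeSize d h) c + budget d (k + 1)) c c' ∧
      Set.EqOn c' c {i | ∀ m < d - 1, i ∉ subtree d (d * v + 1 + m)} ∧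
      (∀ m < d - 1, c' (d * v + 1 + m) = (1 / 2, 0) ∧ EmptyBelow d c' (d * v + 1 + m)) ∧
      weight (treeSize d h) c' = weight (treeSize d h) c + (d - 1 : ℕ) * (1 / 2) :=
  reach_children hd (P := budget d k + 1 / 2)
    (fun m hm c hc hsrc he => by
      obtain ⟨c', hr, hfr, hv', he', hw⟩ :=
        hP.clean hC (hv.child hkh hm) hc he (β := 1 / 2) (by simp [hsrc]) (by norm_num)
      exact ⟨c', by rwa [← add_assoc], hfr, hv', he', by simp [hw, pw, hsrc]⟩)
    (by omega) hc (fun m _ => he.child (by omega))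
    (fun m hm => by have := natCast_le_sub_two hm; rw [budget_succ]; linarith)

lemma cover_succ (hd : 0 < d) (hk : 2 ≤ k) (hkh : k + 1 ≤ h) (hP : PebblesWithPile d h k)
    (hC : ClearsPile d h k) {v : ℕ} {c : Cfg} (hv : AtHeight d h (k + 1) v)
    (hc : Valid (treeSize d h) c) (he : EmptyBelow d c v) :
    ∃ c', Reach d (treeSize d h) (weight (treeSize d h) c + budget d (k + 1)) c c' ∧
      Set.EqOn c' c {i | ∀ m < d, i ∉ subtree d (d * v + 1 + m)} ∧ CoveredWithPile d k c' v ∧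
      weight (treeSize d h) c' = weight (treeSize d h) c + d + pileWeight d k := by
  have hcast : ((d - 1 : ℕ) : ℝ) = d - 1 := Nat.cast_pred hd
  obtain ⟨c₁, hr₁, hfr₁, hdst₁, hw₁⟩ := exists_reach_children_half_black hd hkh hP hC hv hc he
  obtain ⟨hlast₁, helast₁⟩ := and_emptyBelow_of_eqOn_subtree
    (eqOn_subtree_child_of_eqOn hd le_rfl (by omega) hfr₁) (he.child (m := d - 1) (by omega))
  obtain ⟨c₂, hr₂, hfr₂, hv₂, hpile₂, hw₂⟩ :=
    hP (hv.child hkh (by omega)) (hr₁.valid hc) helast₁ (by simp [hlast₁]) le_rfl (β := 1)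
  obtain ⟨c₃, hr₃, hfr₃, hdst₃, hw₃⟩ := reach_children hd (n := treeSize d h) (v := v)
    (P := 1 / 2) (q := 1 / 2) (W := weight (treeSize d h) c + budget d (k + 1))
    (src := (1 / 2, 0)) (dst := (1 / 2, 1 / 2))
    (fun m hm _ hc hsrc he => exists_reach_white_half
      ((hv.child hkh hm).lt_treeSize (by omega) (by omega)) hc hsrc he)
    (M := d - 1) (by omega) (hr₂.valid (hr₁.valid hc))
    (fun m hm => and_emptyBelow_of_eqOn_subtree
      (eqOn_subtree_sibling hd (by omega) (by omega) (by omega : d - 1 ≠ m) hfr₂) (hdst₁ m hm))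
    (fun m hm => by
      have := natCast_le_sub_two hm
      have := pileWeight_add_self d k
      rw [hw₂, hw₁, budget_succ, hcast]
      simp only [pw, hlast₁, Prod.fst_zero, Prod.snd_zero]
      linarith)
  have hsame₃ : Set.EqOn c₃ c₂ (subtree d (d * v + 1 + (d - 1))) :=
    eqOn_subtree_child_of_eqOn hd le_rfl (by omega) hfr₃
  refine ⟨c₃, hr₁.trans ((hr₂.mono ?_).trans hr₃), fun i hi => ?_, ⟨hdst₃,
    (hsame₃ (mem_subtree_self d _)).trans hv₂,
    hpile₂.congr hd (hsame₃.mono (descendants_subset_subtree d _))⟩, ?_⟩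
  · rw [hw₁, budget_succ, hcast]
    linarith
  · rw [hfr₃ fun m hm => hi m (by omega), hfr₂ (hi (d - 1) (by omega)),
      hfr₁ fun m hm => hi m (by omega)]
  · rw [hw₃, hw₂, hw₁, hcast]
    simp only [pw, hlast₁, Prod.fst_zero, Prod.snd_zero]
    ring

lemma pebblesWithPile_succ (hd : 0 < d) (hk : 2 ≤ k) (hkh : k + 1 ≤ h)
    (hP : PebblesWithPile d h k) (hC : ClearsPile d h k) : PebblesWithPile d h (k + 1) := by
  intro v c β hv hc he hβ hβ₁
  obtain ⟨c₁, hr₁, hfr₁, hcov, hw₁⟩ := cover_succ hd hk hkh hP hC hv hc he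
  have hvn := hv.lt_treeSize (by omega) hkh
  have hv₁ : c₁ v = c v := hfr₁ fun m _ => self_notMem_subtree_child hd
  have hw₂ := weight_slide (c := c₁) (β := β) hvn (hv.last_child_lt_treeSize (by omega) hkh hd)
  rw [hcov.sum_black hd, hw₁, show pw c₁ v = pw c v by rw [pw, pw, hv₁]] at hw₂
  have : (1 : ℝ) ≤ d := by exact_mod_cast hd
  have := pw_nonneg hc v
  have := pileWeight_add_self d (k + 1)
  have := pileWeight_succ d k
  refine ⟨slide d v β c₁, hr₁.trans (reach_slide (hr₁.valid hc) hvn hcov.covered (hv₁ ▸ hβ) hβ₁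
      (by rw [hw₂]; linarith)), fun i hi => ?_, slide_self, hcov.pile_slide hd hk,
    by rw [hw₂]; linarith⟩
  exact (slide_eqOn_compl_subtree hi).trans
    (hfr₁ fun m hm h => hi (subtree_child_subset_subtree hm h))

lemma pebblesWithPile_and_clearsPile (hd : 0 < d) (hk : 2 ≤ k) (hkh : k ≤ h) :
    PebblesWithPile d h k ∧ ClearsPile d h k := by
  induction k, hk using Nat.le_induction with
  | base => exact ⟨pebblesWithPile_two hd hkh, clearsPile_two⟩
  | succ k hk ih =>
    obtain ⟨hP, hC⟩ := ih (by omega)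
    exact ⟨pebblesWithPile_succ hd hk hkh hP hC, clearsPile_succ hd hk hkh hP hC⟩

lemma reach_zero_of_pebbled_root (hd : 0 < d) (hh : 2 ≤ h) (hC : ClearsPile d h h) {c : Cfg}
    (hc : Valid (treeSize d h) c) (hroot : c 0 = (1, 0)) (hpile : Pile d c h 0) :
    Reach d (treeSize d h) (weight (treeSize d h) c - 1 + d) c 0 := by
  have hn : 0 < treeSize d h := atHeight_root.lt_treeSize (by omega) le_rfl
  have hpw : pw c 0 = 1 := by simp [pw, hroot]
  have hr : Reach d (treeSize d h) (weight (treeSize d h) c - 1 + d) c (Function.update c 0 0) :=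
    reach_update (move_update_black_le (by simp [hroot]) (by simp [hroot])) hc hn le_rfl le_rfl
      (by norm_num) (by simp [hpw])
  obtain ⟨c', hr', hfr, he, -⟩ := hC atHeight_root (hr.valid hc)
    (hpile.congr hd fun i hi => Function.update_of_ne (lt_of_mem_descendants hi).ne' _ _)
  have hc' : c' = 0 := funext fun i => by
    rcases eq_or_ne i 0 with rfl | hi
    · exact (hfr fun h => (lt_of_mem_descendants h).false).trans (Function.update_self ..)
    · exact he (mem_descendants_of_mem_subtree_of_ne (mem_subtree_zero hd i) hi)
  rw [weight_update hn, hpw, hc'] at hr'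
  exact hr.trans (hr'.mono (by simp))

end Strategy

section RootPebbling

variable {d n : ℕ} {W : ℝ}

lemma ReflTransGen.exists_extend {α : Type*} {r : α → α → Prop} {a b : α}
    (hab : ReflTransGen r a b) {f : ℕ → α} {T : ℕ} (hfT : f T = a)
    (hf : ∀ t < T, r (f t) (f (t + 1))) :
    ∃ (T' : ℕ) (g : ℕ → α), T ≤ T' ∧ (∀ t ≤ T, g t = f t) ∧ g T' = b ∧
      ∀ t < T', r (g t) (g (t + 1)) := by
  induction hab with
  | refl => exact ⟨T, f, le_rfl, fun _ _ => rfl, hfT, hf⟩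
  | @tail b c _ hbc ih =>
    obtain ⟨T', g, hT, hgf, hgb, hg⟩ := ih
    refine ⟨T' + 1, fun t => if t ≤ T' then g t else c, by omega,
      fun t ht => by simp [show t ≤ T' by omega, hgf t ht], by simp, fun t ht => ?_⟩
    rcases Nat.lt_or_ge t T' with ht' | ht'
    · simpa [ht'.le, show t + 1 ≤ T' by omega] using hg t ht'
    · obtain rfl : t = T' := by omega
      simpa [hgb] using hbc

lemma valid_zero : Valid n 0 := ⟨fun _ => by simp [pw], fun _ _ => rfl⟩

lemma weight_zero : weight n 0 = 0 := by simp [weight, pw]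

lemma exists_rootPebbling {c : Cfg} (hW : 0 ≤ W) (h₁ : Reach d n W 0 c) (hc : pw c 0 = 1)
    (h₂ : Reach d n W c 0) : ∃ T f, RootPebbling d n T f ∧ ∀ t ≤ T, weight n (f t) ≤ W := by
  obtain ⟨T₁, g₁, -, hg₁, hg₁T, hchain₁⟩ :=
    ReflTransGen.exists_extend h₁ (f := fun _ => 0) (T := 0) rfl (by simp)
  obtain ⟨T₂, g₂, hT, hg₂, hg₂T, hchain₂⟩ := ReflTransGen.exists_extend h₂ hg₁T hchain₁
  have hstart : g₂ 0 = 0 := (hg₂ 0 (Nat.zero_le _)).trans (hg₁ 0 le_rfl)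
  refine ⟨T₂, g₂, ⟨⟨fun t ht => ?_, fun t ht => (hchain₂ t ht).1⟩, fun _ => by rw [hstart]; rfl,
    fun _ => by rw [hg₂T]; rfl, T₁, hT, by rw [hg₂ T₁ le_rfl, hg₁T, hc]⟩, fun t ht => ?_⟩
  · cases t with
    | zero => exact hstart ▸ valid_zero
    | succ t => exact (hchain₂ t ht).2.1
  · cases t with
    | zero => rw [hstart, weight_zero]; exact hW
    | succ t => exact (hchain₂ t ht).2.2

end RootPebbling

end FracPebbling

open FracPebbling

/-- there is a fractional root-pebbling of the d-ary tree of height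
h ≥ 2 (d ≥ 2) whose total weight never exceeds (d-1)·h/2 + 1. -/
theorem frac_upper (d h : ℕ) (hd : 2 ≤ d) (hh : 2 ≤ h) :
    ∃ T c, RootPebbling d (treeSize d h) T c ∧
      ∀ t, t ≤ T → weight (treeSize d h) (c t) ≤ ((d : ℝ) - 1) * h / 2 + 1 := by
  have hd₀ : 0 < d := by omega
  obtain ⟨hP, hC⟩ := pebblesWithPile_and_clearsPile hd₀ hh le_rfl
  obtain ⟨c, hr₁, -, hroot, hpile, hw⟩ :=
    hP atHeight_root valid_zero (fun _ _ => rfl) (by simp) le_rfl (β := 1)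
  rw [weight_zero, zero_add] at hr₁
  simp only [weight_zero, pw, Pi.zero_apply, Prod.fst_zero, Prod.snd_zero] at hw
  have hr₂ := reach_zero_of_pebbled_root hd₀ hh hC (hr₁.valid valid_zero) hroot hpile
  have := pileWeight_add_self d h
  have := pileWeight_nonneg hd₀ hh
  exact exists_rootPebbling (W := budget d h) (by linarith) hr₁
    (by simp [pw, hroot]) (hr₂.mono (by rw [hw]; linarith))
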